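/- arXiv:1211.6778 — 4 statements merged into one kernel-verified Lean document; each statement's English description precedes it below -/
import Mathlib

section
/- The infinite-buffer tandem recursion admits the closed-form max-plus representation: D(n,k) = max over all nondecreasing lattice paths from (0,1) to (n,k) of the sum of τ along the path, i.e., D(n,k) = max over sequences 1 = j_0 ≤ j_1 ≤ ... ≤ j_n = k of Σ_{m=0}^{n} Σ_{j=j_{m-1}}^{j_m} τ(m,j) appropriately interpreted (with j_{-1} = 1); equivalently, D(n,k) = max_{1 ≤ j ≤ k} ( D(n-1,j) + Σ_{i=j}^{k} τ(n,i) ). -/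
/-!
Fix the row `n` and read the recursion as a first-order max-plus recursion in `k`:
`D(n,k) = max (D(n-1,k)) (D(n,k-1)) + τ(n,k)`. Since `+ τ(n,k)` distributes over `max`,
induction on `k` unrolls it into a maximum over the column `j` at which the path enters row
`n`. The boundary term `D(n,0) = 0` is absorbed because `D(n-1,1) ≥ D(n-1,0) + τ(n-1,1) ≥ 0`.
-/

open Finset

lemma eq_sup'_add_sum_Icc_of_eq_max_add {G : Type*} [AddCommGroup G] [LinearOrder G]
    [IsOrderedAddMonoid G] {f a t : ℤ → G} (h₀ : f 0 ≤ a 1)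
    (hf : ∀ k, 1 ≤ k → f k = max (a k) (f (k - 1)) + t k) {k : ℤ} (hk : 1 ≤ k) :
    f k = (Icc 1 k).sup' (nonempty_Icc.mpr hk) fun j => a j + ∑ i ∈ Icc j k, t i := by
  induction k, hk using Int.leInduction with
  | base => simp [hf 1 le_rfl, max_eq_left h₀]
  | succ k hk ih =>
    have hsum : ∀ j ∈ Icc 1 k, ∑ i ∈ Icc j (k + 1), t i = ∑ i ∈ Icc j k, t i + t (k + 1) := by
      intro j hj
      rw [← insert_Icc_right_eq_Icc_add_one (by linarith [(mem_Icc.mp hj).2]),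
        sum_insert (by simp), add_comm]
    calc f (k + 1) = max (a (k + 1) + t (k + 1)) (f k + t (k + 1)) := by
          rw [hf (k + 1) (by omega), add_sub_cancel_right, max_add_add_right]
      _ = max (a (k + 1) + ∑ i ∈ Icc (k + 1) (k + 1), t i)
            ((Icc 1 k).sup' (nonempty_Icc.mpr hk) fun j => a j + ∑ i ∈ Icc j (k + 1), t i) := by
          rw [ih, sup'_add, Icc_self, sum_singleton]
          congr 1
          exact sup'_congr _ rfl fun j hj => by rw [hsum j hj, add_assoc]
      _ = _ := by
          simp_rw [← insert_Icc_right_eq_Icc_add_one (show (1 : ℤ) ≤ k + 1 by omega)]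
          rw [sup'_insert]

/-- One-step max-plus unfolding of the infinite-buffer tandem recursion:
    D(n,k) = max_{1 ≤ j ≤ k} ( D(n-1,j) + Σ_{i=j}^{k} τ(n,i) ). -/
theorem tandem_maxplus_unfolding
    (D τ : ℤ → ℤ → ℝ)
    (hbd : ∀ n k : ℤ, k ≤ 0 → D n k = 0)
    (hneg : ∀ n k : ℤ, n < 0 → D n k = 0)
    (hτ : ∀ n k : ℤ, 0 ≤ τ n k)
    (hrec : ∀ n k : ℤ, 0 ≤ n → 1 ≤ k →
      D n k = max (D (n-1) k) (D n (k-1)) + τ n k)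
    (n k : ℤ) (hn : 0 ≤ n) (hk : 1 ≤ k) :
    D n k = (Finset.Icc (1:ℤ) k).sup'
      (Finset.nonempty_Icc.mpr hk)
      (fun j => D (n-1) j + ∑ i ∈ Finset.Icc j k, τ n i) := by
  have hD_one_nonneg : ∀ m, 0 ≤ D m 1 := by
    intro m
    rcases lt_or_ge m 0 with hm | hm
    · exact (hneg m 1 hm).ge
    · rw [hrec m 1 hm le_rfl, sub_self, hbd m 0 le_rfl]
      exact add_nonneg (le_max_right _ _) (hτ m 1)
  refine eq_sup'_add_sum_Icc_of_eq_max_add ?_ (fun k hk => hrec n k hn hk) hk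
  rw [hbd n 0 le_rfl]
  exact hD_one_nonneg (n - 1)
end

section
/- Correctness of the in-place single-array algorithm: the sequential algorithm which initializes d(-1) = d(0) = ... = d(N) = 0 and, for i = 1, ..., K+N, iterates over j from max(1, i-N) to min(i, K) setting d(i-j) ← max(d(i-j-1), d(i-j)) + τ(i-j, j), terminates with d(n) = D(n,K) for every n = 0, 1, ..., N, where D is the solution of the tandem recursion D(n,k) = max(D(n-1,k), D(n,k-1)) + τ(n,k) with D(n,0)=0 and D(-1,k)=0. -/
/-- One pass of the inner loop of the in-place algorithm at outer iteration `i`: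
    for j = max(1, i-N), ..., min(i, K), set
    d(i-j) ← max(d(i-j-1), d(i-j)) + τ(i-j, j). -/
def innerLoop (τ : ℤ → ℤ → ℝ) (N K i : ℕ) (d : ℤ → ℝ) : ℤ → ℝ :=
  (List.range' (max 1 (i - N)) (min i K - max 1 (i - N) + 1)).foldl
    (fun d j =>
      Function.update d ((i : ℤ) - (j : ℤ))
        (max (d ((i : ℤ) - (j : ℤ) - 1)) (d ((i : ℤ) - (j : ℤ))) + τ ((i : ℤ) - (j : ℤ)) (j : ℤ)))
    d

/-- The whole in-place algorithm: start from the zero array and run the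
    outer loop for i = 1, ..., K+N. -/
def runAlgorithm (τ : ℤ → ℤ → ℝ) (N K : ℕ) : ℤ → ℝ :=
  (List.range' 1 (K + N)).foldl (fun d i => innerLoop τ N K i d) (fun _ => 0)

/-!
Loop invariant: after outer iteration `i` the array holds `d n = D n (min (i - n) K)` on `0 ≤ n ≤ N`
and `0` elsewhere. In iteration `i` the inner loop sweeps `n = i - j` downwards, so when it reaches
`n` the entry `d n` still holds `D n (j - 1)` from iteration `i - 1`, while `d (n - 1)` has not been
touched yet and holds `D (n - 1) j`; the update is then exactly the recursion for `D n j`.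
At the boundaries the invariant is preserved because `D` vanishes for `k ≤ 0` and for `n < 0`.
-/

theorem List.foldl_range'_eq_of_step {α : Type*} (f : α → ℕ → α) (G : ℕ → α) (c m : ℕ)
    (hstep : ∀ j, c ≤ j → j < c + m → f (G j) j = G (j + 1)) :
    (List.range' c m).foldl f (G c) = G (c + m) := by
  induction m generalizing c with
  | zero => simp
  | succ m ih =>
    rw [List.range'_succ, List.foldl_cons, hstep c le_rfl (by omega),
      ih (c + 1) fun j hj hj' => hstep j (by omega) (by omega), Nat.add_right_comm, Nat.add_assoc]

def relax (τ : ℤ → ℤ → ℝ) (i : ℕ) (d : ℤ → ℝ) (j : ℕ) : ℤ → ℝ :=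
  Function.update d ((i : ℤ) - j) (max (d ((i : ℤ) - j - 1)) (d ((i : ℤ) - j)) + τ ((i : ℤ) - j) j)

-- `innerLoop` runs over the indices coerced to `List ℤ`; `relax` casts each index instead.
theorem innerLoop_eq_foldl_relax (τ : ℤ → ℤ → ℝ) (N K i : ℕ) (d : ℤ → ℝ) :
    innerLoop τ N K i d =
      (List.range' (max 1 (i - N)) (min i K - max 1 (i - N) + 1)).foldl (relax τ i) d := by
  simp only [innerLoop, bind_pure_comp, List.map_eq_map, List.foldl_map]
  rfl

noncomputable def arrayAfter (D : ℤ → ℤ → ℝ) (N K i : ℕ) : ℤ → ℝ :=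
  fun n => if 0 ≤ n ∧ n ≤ (N : ℤ) then D n (min ((i : ℤ) - n) K) else 0

/-- The array inside outer iteration `i`, once the inner loop has processed every `j < c`. -/
noncomputable def arrayMidway (D : ℤ → ℤ → ℝ) (N K i c : ℕ) : ℤ → ℝ :=
  fun n => if (i : ℤ) - c < n then arrayAfter D N K i n else arrayAfter D N K (i - 1) n

section

variable (D τ : ℤ → ℤ → ℝ) {N K : ℕ}

theorem arrayAfter_zero (hbd : ∀ n k : ℤ, k ≤ 0 → D n k = 0) :
    arrayAfter D N K 0 = fun _ => 0 := by
  funext n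
  unfold arrayAfter
  split_ifs
  · exact hbd n _ (by omega)
  · rfl

theorem arrayMidway_start (hbd : ∀ n k : ℤ, k ≤ 0 → D n k = 0) {i : ℕ} :
    arrayMidway D N K i (max 1 (i - N)) = arrayAfter D N K (i - 1) := by
  funext n
  unfold arrayMidway arrayAfter
  split_ifs <;> first | rfl | rw [hbd n _ (by omega), hbd n _ (by omega)]

theorem arrayMidway_finish {i : ℕ} :
    arrayMidway D N K i (min i K + 1) = arrayAfter D N K i := by
  funext n
  unfold arrayMidway arrayAfter
  split_ifs <;> first | rfl | (congr 1; omega)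

theorem relax_arrayMidway (hneg : ∀ n k : ℤ, n < 0 → D n k = 0)
    (hrec : ∀ n k : ℤ, 0 ≤ n → 1 ≤ k → D n k = max (D (n - 1) k) (D n (k - 1)) + τ n k)
    {i c : ℕ} (hc : max 1 (i - N) ≤ c) (hc' : c ≤ min i K) :
    relax τ i (arrayMidway D N K i c) c = arrayMidway D N K i (c + 1) := by
  funext n
  by_cases hn : n = (i : ℤ) - c
  · subst hn
    have hcur : arrayMidway D N K i c ((i : ℤ) - c) = D ((i : ℤ) - c) ((c : ℤ) - 1) := by
      unfold arrayMidway arrayAfter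
      rw [if_neg (by omega), if_pos (by omega)]
      congr 1
      omega
    have hprev : arrayMidway D N K i c ((i : ℤ) - c - 1) = D ((i : ℤ) - c - 1) c := by
      unfold arrayMidway arrayAfter
      rw [if_neg (by omega)]
      split_ifs
      · congr 1
        omega
      · rw [hneg _ _ (by omega)]
    have hnext : arrayMidway D N K i (c + 1) ((i : ℤ) - c) = D ((i : ℤ) - c) c := by
      unfold arrayMidway arrayAfter
      rw [if_pos (by omega), if_pos (by omega)]
      congr 1
      omega
    rw [relax, Function.update_self, hcur, hprev, hnext, hrec ((i : ℤ) - c) c (by omega) (by omega)]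
  · rw [relax, Function.update_of_ne hn]
    unfold arrayMidway
    split_ifs <;> first | rfl | omega

theorem innerLoop_arrayAfter (hbd : ∀ n k : ℤ, k ≤ 0 → D n k = 0)
    (hneg : ∀ n k : ℤ, n < 0 → D n k = 0)
    (hrec : ∀ n k : ℤ, 0 ≤ n → 1 ≤ k → D n k = max (D (n - 1) k) (D n (k - 1)) + τ n k)
    (hK : 1 ≤ K) {i : ℕ} (hi : 1 ≤ i) (hi' : i ≤ K + N) :
    innerLoop τ N K i (arrayAfter D N K (i - 1)) = arrayAfter D N K i := by
  have hlen : max 1 (i - N) + (min i K - max 1 (i - N) + 1) = min i K + 1 := by omega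
  rw [innerLoop_eq_foldl_relax, ← arrayMidway_start D hbd,
    List.foldl_range'_eq_of_step _ _ _ _ fun j hj hj' =>
      relax_arrayMidway D τ hneg hrec hj (by omega), hlen,
    arrayMidway_finish]

theorem runAlgorithm_eq_arrayAfter (hbd : ∀ n k : ℤ, k ≤ 0 → D n k = 0)
    (hneg : ∀ n k : ℤ, n < 0 → D n k = 0)
    (hrec : ∀ n k : ℤ, 0 ≤ n → 1 ≤ k → D n k = max (D (n - 1) k) (D n (k - 1)) + τ n k)
    (hK : 1 ≤ K) :
    runAlgorithm τ N K = arrayAfter D N K (K + N) := by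
  have hfold := List.foldl_range'_eq_of_step (fun d i => innerLoop τ N K i d)
    (fun i => arrayAfter D N K (i - 1)) 1 (K + N) fun i hi hi' => by
      simpa using innerLoop_arrayAfter D τ hbd hneg hrec hK hi (by omega : i ≤ K + N)
  rwa [Nat.add_sub_cancel_left, Nat.sub_self, arrayAfter_zero D hbd] at hfold

end

theorem inplace_algorithm_correct_general
    (D τ : ℤ → ℤ → ℝ) (N K : ℕ) (hNK : N < K)
    (hbd : ∀ n k : ℤ, k ≤ 0 → D n k = 0)
    (hneg : ∀ n k : ℤ, n < 0 → D n k = 0)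
    (hrec : ∀ n k : ℤ, 0 ≤ n → 1 ≤ k →
      D n k = max (D (n-1) k) (D n (k-1)) + τ n k) :
    ∀ n : ℤ, 0 ≤ n → n ≤ (N : ℤ) → runAlgorithm τ N K n = D n (K : ℤ) := by
  intro n hn hnN
  rw [runAlgorithm_eq_arrayAfter D τ hbd hneg hrec (by omega), arrayAfter, if_pos ⟨hn, hnN⟩]
  congr 1
  omega

/-- Correctness of the in-place single-array algorithm: upon termination,
    d(n) = D(n,K) for all n = 0, ..., N. -/
theorem inplace_algorithm_correct
    (D τ : ℤ → ℤ → ℝ) (N K : ℕ) (hNK : N < K)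
    (hbd : ∀ n k : ℤ, k ≤ 0 → D n k = 0)
    (hneg : ∀ n k : ℤ, n < 0 → D n k = 0)
    (hτ : ∀ n k : ℤ, 0 ≤ τ n k)
    (hrec : ∀ n k : ℤ, 0 ≤ n → 1 ≤ k →
      D n k = max (D (n-1) k) (D n (k-1)) + τ n k) :
    ∀ n : ℤ, 0 ≤ n → n ≤ (N : ℤ) → runAlgorithm τ N K n = D n (K : ℤ) :=
  inplace_algorithm_correct_general D τ N K hNK hbd hneg hrec
end

section
/- Communication blocking is at least as restrictive as manufacturing blocking: with the same service times τ ≥ 0 and buffer capacities m, the departure epochs satisfy D_M(n,k) ≤ D_C(n,k) for all n, k, where D_M is the solution of the manufacturing-blocking recursion and D_C of the communication-blocking recursion. -/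
/-!
Induct on `k`, and for fixed `k` on `n`. In the recursion step every argument of `D_M` on the
right-hand side is an earlier index (`(n-1, k)`, `(n, k-1)` or `(n+1, k-m(n+1)-1)` with
`m(n+1) ≥ 1`), so it is bounded by the corresponding value of `D_C`; and since `τ ≥ 0`, adding
`τ` outside the outer `max` rather than inside its first argument can only increase it.
-/

theorem max_max_add_le_max_max_add {α : Type*} [AddCommMonoid α] [LinearOrder α]
    [IsOrderedAddMonoid α] {a b c a' b' c' t : α} (ha : a ≤ a') (hb : b ≤ b') (hc : c ≤ c')
    (ht : 0 ≤ t) : max (max a b + t) c ≤ max (max a' b') c' + t :=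
  max_le (add_le_add_left ((max_le_max ha hb).trans (le_max_left _ _)) t)
    (hc.trans <| (le_max_right _ _).trans <| le_add_of_nonneg_right ht)

theorem Int.lex_induction {P : ℤ → ℤ → Prop} (hk : ∀ n k, k ≤ 0 → P n k)
    (hn : ∀ n k, n < 0 → P n k)
    (step : ∀ n k, 0 ≤ n → 1 ≤ k → (∀ n' k', k' < k → P n' k') → P (n - 1) k → P n k)
    (n k : ℤ) : P n k := by
  induction k using Int.strongRec (m := 1) generalizing n with
  | lt k hk1 => exact hk n k (by omega)
  | ge k hk1 ihk =>
    induction n using Int.strongRec (m := 0) with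
    | lt n hn0 => exact hn n k hn0
    | ge n hn0 ihn => exact step n k hn0 hk1 (fun n' k' hk' => ihk k' hk' n') (ihn _ (by omega))

/-- Communication blocking is at least as restrictive as manufacturing
    blocking: D_M(n,k) ≤ D_C(n,k). -/
theorem manufacturing_le_communication
    (N : ℕ) (m : ℤ → ℤ) (τ DM DC : ℤ → ℤ → ℝ)
    (hm : ∀ n : ℤ, 1 ≤ m n)
    (hτ : ∀ n k : ℤ, 0 ≤ τ n k)
    -- manufacturing blocking
    (hMbd : ∀ n k : ℤ, k ≤ 0 → DM n k = 0)
    (hMneg : ∀ n k : ℤ, n < 0 → DM n k = 0)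
    (hMtop : ∀ n k : ℤ, (N : ℤ) < n → DM n k = 0)
    (hMrec : ∀ n k : ℤ, 0 ≤ n → n ≤ (N : ℤ) → 1 ≤ k →
      DM n k = max (max (DM (n-1) k) (DM n (k-1)) + τ n k)
                   (DM (n+1) (k - m (n+1) - 1)))
    -- communication blocking
    (hCbd : ∀ n k : ℤ, k ≤ 0 → DC n k = 0)
    (hCneg : ∀ n k : ℤ, n < 0 → DC n k = 0)
    (hCtop : ∀ n k : ℤ, (N : ℤ) < n → DC n k = 0)
    (hCrec : ∀ n k : ℤ, 0 ≤ n → n ≤ (N : ℤ) → 1 ≤ k →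
      DC n k = max (max (DC (n-1) k) (DC n (k-1)))
                   (DC (n+1) (k - m (n+1) - 1)) + τ n k) :
    ∀ n k : ℤ, DM n k ≤ DC n k := by
  refine Int.lex_induction (fun n k hk => by rw [hMbd n k hk, hCbd n k hk])
    (fun n k hn => by rw [hMneg n k hn, hCneg n k hn]) ?_
  intro n k hn0 hk1 ih_earlier ih_prev
  rcases lt_or_ge (N : ℤ) n with hnN | hnN
  · rw [hMtop n k hnN, hCtop n k hnN]
  rw [hMrec n k hn0 hnN hk1, hCrec n k hn0 hnN hk1]
  exact max_max_add_le_max_max_add ih_prev (ih_earlier n (k - 1) (by omega))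
    (ih_earlier (n + 1) _ (by linarith [hm (n + 1)])) (hτ n k)
end

section
/- Monotonicity of blocking in buffer sizes: if m(n) ≤ m'(n) for all n = 1, ..., N, then the manufacturing-blocking departure epochs satisfy D_{m'}(n,k) ≤ D_m(n,k) for all n, k, i.e., larger buffers yield earlier (or equal) departures. -/
/-!
Larger buffers only relax the blocking constraint. Departures are monotone in the job index
(each job departs after its predecessor at the same station, since `τ ≥ 0`), so the blocking
term `D_{m'}(n+1, k - m'(n+1) - 1)` is at most `D_{m'}(n+1, k - m(n+1) - 1)`. A strong induction
on the job index `k`, and inside it on the station `n`, then compares the two recursions term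
by term.
-/

structure IsBlockingDeparture (N : ℕ) (m : ℤ → ℤ) (τ D : ℤ → ℤ → ℝ) : Prop where
  eq_zero_of_nonpos : ∀ n k : ℤ, k ≤ 0 → D n k = 0
  eq_zero_of_neg : ∀ n k : ℤ, n < 0 → D n k = 0
  eq_zero_of_gt : ∀ n k : ℤ, (N : ℤ) < n → D n k = 0
  eq_max : ∀ n k : ℤ, 0 ≤ n → n ≤ (N : ℤ) → 1 ≤ k →
    D n k = max (max (D (n - 1) k) (D n (k - 1)) + τ n k) (D (n + 1) (k - m (n + 1) - 1))

namespace IsBlockingDeparture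

variable {N : ℕ} {m m' : ℤ → ℤ} {τ D D' : ℤ → ℤ → ℝ}

theorem le_succ (hD : IsBlockingDeparture N m τ D) (hτ : ∀ n k, 0 ≤ τ n k) (n k : ℤ) :
    D n k ≤ D n (k + 1) := by
  rcases le_or_gt (k + 1) 0 with hk | hk
  · rw [hD.eq_zero_of_nonpos n k (by omega), hD.eq_zero_of_nonpos n (k + 1) hk]
  rcases lt_or_ge n 0 with hn | hn
  · rw [hD.eq_zero_of_neg n k hn, hD.eq_zero_of_neg n (k + 1) hn]
  rcases lt_or_ge (N : ℤ) n with hN | hN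
  · rw [hD.eq_zero_of_gt n k hN, hD.eq_zero_of_gt n (k + 1) hN]
  rw [hD.eq_max n (k + 1) hn hN (by omega), add_sub_cancel_right]
  calc D n k ≤ max (D (n - 1) (k + 1)) (D n k) + τ n (k + 1) :=
        le_add_of_le_of_nonneg (le_max_right _ _) (hτ n (k + 1))
    _ ≤ _ := le_max_left _ _

theorem monotone (hD : IsBlockingDeparture N m τ D) (hτ : ∀ n k, 0 ≤ τ n k) (n : ℤ) :
    Monotone (D n) :=
  monotone_int_of_le_succ (hD.le_succ hτ n)

theorem nonneg (hD : IsBlockingDeparture N m τ D) (hτ : ∀ n k, 0 ≤ τ n k) (n k : ℤ) :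
    0 ≤ D n k := by
  rcases le_or_gt k 0 with hk | hk
  · exact (hD.eq_zero_of_nonpos n k hk).ge
  · simpa only [hD.eq_zero_of_nonpos n 0 le_rfl] using hD.monotone hτ n hk.le

theorem le_of_buffer_le (hD : IsBlockingDeparture N m τ D) (hD' : IsBlockingDeparture N m' τ D')
    (hm : ∀ n, 0 ≤ m n) (hτ : ∀ n k, 0 ≤ τ n k)
    (hmm' : ∀ n : ℤ, 1 ≤ n → n ≤ (N : ℤ) → m n ≤ m' n) (n k : ℤ) :
    D' n k ≤ D n k := by
  induction k using Int.strongRec (m := 1) generalizing n with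
  | lt k hk => exact (hD'.eq_zero_of_nonpos n k (by omega)).trans_le (hD.nonneg hτ n k)
  | ge k hk ihk =>
    induction n using Int.strongRec (m := 0) with
    | lt n hn => exact (hD'.eq_zero_of_neg n k hn).trans_le (hD.nonneg hτ n k)
    | ge n hn ihn =>
      rcases lt_or_ge (N : ℤ) n with hN | hN
      · exact (hD'.eq_zero_of_gt n k hN).trans_le (hD.nonneg hτ n k)
      have hblock : D' (n + 1) (k - m' (n + 1) - 1) ≤ D (n + 1) (k - m (n + 1) - 1) := by
        rcases lt_or_ge (N : ℤ) (n + 1) with hN' | hN'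
        · exact (hD'.eq_zero_of_gt _ _ hN').trans_le (hD.nonneg hτ _ _)
        calc D' (n + 1) (k - m' (n + 1) - 1) ≤ D' (n + 1) (k - m (n + 1) - 1) :=
              hD'.monotone hτ (n + 1) (by linarith [hmm' (n + 1) (by omega) hN'])
          _ ≤ D (n + 1) (k - m (n + 1) - 1) := ihk _ (by linarith [hm (n + 1)]) _
      rw [hD'.eq_max n k hn hN hk, hD.eq_max n k hn hN hk]
      gcongr
      · exact ihn (n - 1) (by omega)
      · exact ihk (k - 1) (by omega) n

end IsBlockingDeparture

theorem buffer_monotonicity_general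
    (N : ℕ) (m m' : ℤ → ℤ) (τ Dm Dm' : ℤ → ℤ → ℝ)
    (hm : ∀ n : ℤ, 1 ≤ m n)
    (hτ : ∀ n k : ℤ, 0 ≤ τ n k)
    (hmono : ∀ n : ℤ, 1 ≤ n → n ≤ (N : ℤ) → m n ≤ m' n)
    -- recursion with buffers m
    (hbd : ∀ n k : ℤ, k ≤ 0 → Dm n k = 0)
    (hneg : ∀ n k : ℤ, n < 0 → Dm n k = 0)
    (htop : ∀ n k : ℤ, (N : ℤ) < n → Dm n k = 0)
    (hrec : ∀ n k : ℤ, 0 ≤ n → n ≤ (N : ℤ) → 1 ≤ k →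
      Dm n k = max (max (Dm (n-1) k) (Dm n (k-1)) + τ n k)
                   (Dm (n+1) (k - m (n+1) - 1)))
    -- recursion with buffers m'
    (hbd' : ∀ n k : ℤ, k ≤ 0 → Dm' n k = 0)
    (hneg' : ∀ n k : ℤ, n < 0 → Dm' n k = 0)
    (htop' : ∀ n k : ℤ, (N : ℤ) < n → Dm' n k = 0)
    (hrec' : ∀ n k : ℤ, 0 ≤ n → n ≤ (N : ℤ) → 1 ≤ k →
      Dm' n k = max (max (Dm' (n-1) k) (Dm' n (k-1)) + τ n k)
                    (Dm' (n+1) (k - m' (n+1) - 1))) :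
    ∀ n k : ℤ, Dm' n k ≤ Dm n k :=
  IsBlockingDeparture.le_of_buffer_le ⟨hbd, hneg, htop, hrec⟩ ⟨hbd', hneg', htop', hrec'⟩
    (fun n => zero_le_one.trans (hm n)) hτ hmono

/-- Larger buffers yield earlier (or equal) departures under manufacturing
    blocking. -/
theorem buffer_monotonicity
    (N : ℕ) (m m' : ℤ → ℤ) (τ Dm Dm' : ℤ → ℤ → ℝ)
    (hm : ∀ n : ℤ, 1 ≤ m n) (hm' : ∀ n : ℤ, 1 ≤ m' n)
    (hτ : ∀ n k : ℤ, 0 ≤ τ n k)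
    (hmono : ∀ n : ℤ, 1 ≤ n → n ≤ (N : ℤ) → m n ≤ m' n)
    -- recursion with buffers m
    (hbd : ∀ n k : ℤ, k ≤ 0 → Dm n k = 0)
    (hneg : ∀ n k : ℤ, n < 0 → Dm n k = 0)
    (htop : ∀ n k : ℤ, (N : ℤ) < n → Dm n k = 0)
    (hrec : ∀ n k : ℤ, 0 ≤ n → n ≤ (N : ℤ) → 1 ≤ k →
      Dm n k = max (max (Dm (n-1) k) (Dm n (k-1)) + τ n k)
                   (Dm (n+1) (k - m (n+1) - 1)))
    -- recursion with buffers m'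
    (hbd' : ∀ n k : ℤ, k ≤ 0 → Dm' n k = 0)
    (hneg' : ∀ n k : ℤ, n < 0 → Dm' n k = 0)
    (htop' : ∀ n k : ℤ, (N : ℤ) < n → Dm' n k = 0)
    (hrec' : ∀ n k : ℤ, 0 ≤ n → n ≤ (N : ℤ) → 1 ≤ k →
      Dm' n k = max (max (Dm' (n-1) k) (Dm' n (k-1)) + τ n k)
                    (Dm' (n+1) (k - m' (n+1) - 1))) :
    ∀ n k : ℤ, Dm' n k ≤ Dm n k :=
  buffer_monotonicity_general N m m' τ Dm Dm' hm hτ hmono hbd hneg htop hrec hbd' hneg' htop' hrec'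
end
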